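/- Partial-ISS Lyapunov characterization (sufficiency): Consider the system x₁(k+1)=g₁(x₁(k),x₂(k),u(k)), x₂(k+1)=g₂(x₁(k),x₂(k),u(k)) with continuous g = (g₁,g₂) globally K-bounded with respect to ω(x₁,x₂) := |x₁|. If there exist a continuous V : ℝ^{n₁} × ℝ^{n₂} → ℝ≥0, an integer M > 0, α̲, ᾱ ∈ K∞, γ ∈ K, and α ∈ K∞ with α < id such that α̲(|ξ₁|) ≤ V(ξ₁,ξ₂) ≤ ᾱ(|ξ₁|) and V(x₁(M,ξ,u), x₂(M,ξ,u)) ≤ max{α(V(ξ₁,ξ₂)), γ(‖u‖)} for all ξ = (ξ₁,ξ₂) and bounded u, then the system is uniformly input-to-x₁-state stable: there exist β ∈ KL and γ' ∈ K with |x₁(k,ξ,u)| ≤ max{β(|ξ₁|,k), γ'(‖u‖)} for all k, ξ, u. -/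

import Mathlib

/-!
Sampling the Lyapunov inequality every `M` steps gives `V (x (M j)) ≤ max (αʲ (V ξ)) (γ ‖u‖)`,
and `αʲ → 0` because `α < id`. Between two sampling instants, K-boundedness of `g` bounds `|x₁|`
by a class-K function of `max |x₁ (M j)| ‖u‖`, and splitting this maximum gives the KL term and
the gain term. Interpolating the iterates `αʲ` piecewise linearly in `j` makes the KL bound
continuous in time.
-/

open Filter Topology

/-- Class-K function: continuous, strictly increasing on [0,∞), zero at zero. -/
def ClassK (α : ℝ → ℝ) : Prop :=
  ContinuousOn α (Set.Ici 0) ∧ StrictMonoOn α (Set.Ici 0) ∧ α 0 = 0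

/-- Class-K∞ function. -/
def ClassKInf (α : ℝ → ℝ) : Prop :=
  ClassK α ∧ Filter.Tendsto α Filter.atTop Filter.atTop

/-- Class-KL function. -/
def ClassKL (β : ℝ → ℝ → ℝ) : Prop :=
  ContinuousOn (fun p : ℝ × ℝ => β p.1 p.2) (Set.Ici 0 ×ˢ Set.Ici 0) ∧
  (∀ s, 0 ≤ s → ClassK (fun r => β r s)) ∧
  (∀ r, 0 ≤ r → AntitoneOn (fun s => β r s) (Set.Ici 0) ∧
    Filter.Tendsto (fun s => β r s) Filter.atTop (nhds 0))

/-- Measurement function: continuous and positive semidefinite. -/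
def MeasurementFn {E : Type*} [TopologicalSpace E] (ω : E → ℝ) : Prop :=
  Continuous ω ∧ ∀ x, 0 ≤ ω x

/-- Sup-norm of an input sequence. -/
noncomputable def supNorm {U : Type*} [Norm U] (u : ℕ → U) : ℝ := ⨆ k, ‖u k‖

/-- A bounded input sequence. -/
def BddInput {U : Type*} [Norm U] (u : ℕ → U) : Prop := ∃ C, ∀ k, ‖u k‖ ≤ C

/-- Solution of x(k+1) = g(x(k), u(k)) from initial state ξ. -/
def sol {E U : Type*} (g : E → U → E) (ξ : E) (u : ℕ → U) : ℕ → E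
  | 0 => ξ
  | k + 1 => g (sol g ξ u k) (u k)

/-- Composition of gains along a path i(0), i(1), ..., i(k):
`γ (i 0) (i 1) ∘ γ (i 1) (i 2) ∘ ⋯ ∘ γ (i (k-1)) (i k)`. -/
def compAlong {ℓ : ℕ} (γ : Fin ℓ → Fin ℓ → ℝ → ℝ) (i : ℕ → Fin ℓ) : ℕ → ℝ → ℝ
  | 0 => id
  | k + 1 => (compAlong γ i k) ∘ γ (i k) (i (k + 1))

/-- Cyclic small-gain condition: all gain compositions along cycles of
length at most ℓ are strictly below the identity. -/
def SmallGainCond {ℓ : ℕ} (γ : Fin ℓ → Fin ℓ → ℝ → ℝ) : Prop :=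
  ∀ r : ℕ, 1 ≤ r → r ≤ ℓ → ∀ i : ℕ → Fin ℓ, i r = i 0 →
    ∀ s : ℝ, 0 < s → compAlong γ i r s < s

/-- A monotonic norm on ℝ^ℓ. -/
def MonotoneNorm {ℓ : ℕ} (μ : (Fin ℓ → ℝ) → ℝ) : Prop :=
  (∀ z, 0 ≤ μ z) ∧ (∀ z, μ z = 0 ↔ z = 0) ∧
  (∀ (c : ℝ) z, μ (c • z) = |c| * μ z) ∧
  (∀ z w, μ (z + w) ≤ μ z + μ w) ∧
  (∀ z w : Fin ℓ → ℝ, (∀ i, 0 ≤ z i) → (∀ i, z i ≤ w i) → μ z ≤ μ w)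

/-- Class-K functions extended to all of `ℝ`, so that no `0 ≤ s` side conditions are needed. -/
structure ClassKGlobal (f : ℝ → ℝ) : Prop where
  continuous : Continuous f
  strictMono : StrictMono f
  map_zero : f 0 = 0

namespace ClassKGlobal

variable {f g : ℝ → ℝ}

protected theorem id : ClassKGlobal fun s => s := ⟨continuous_id, strictMono_id, rfl⟩

theorem monotone (hf : ClassKGlobal f) : Monotone f := hf.strictMono.monotone

theorem nonneg (hf : ClassKGlobal f) {s : ℝ} (hs : 0 ≤ s) : 0 ≤ f s :=
  hf.map_zero ▸ hf.monotone hs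

theorem le_self_of_lt (hf : ClassKGlobal f) (hlt : ∀ s, 0 < s → f s < s) {s : ℝ} (hs : 0 ≤ s) :
    f s ≤ s := by
  rcases hs.eq_or_lt with rfl | hs
  · rw [hf.map_zero]
  · exact (hlt s hs).le

theorem classK (hf : ClassKGlobal f) : ClassK f :=
  ⟨hf.continuous.continuousOn, hf.strictMono.strictMonoOn _, hf.map_zero⟩

theorem comp (hf : ClassKGlobal f) (hg : ClassKGlobal g) : ClassKGlobal fun s => f (g s) :=
  ⟨hf.continuous.comp hg.continuous, hf.strictMono.comp hg.strictMono, by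
    simp [hg.map_zero, hf.map_zero]⟩

theorem add (hf : ClassKGlobal f) (hg : ClassKGlobal g) : ClassKGlobal fun s => f s + g s :=
  ⟨hf.continuous.add hg.continuous, hf.strictMono.add hg.strictMono, by
    simp [hf.map_zero, hg.map_zero]⟩

theorem sum {F : ℕ → ℝ → ℝ} (hF : ∀ i, ClassKGlobal (F i)) {M : ℕ} (hM : 0 < M) :
    ClassKGlobal fun s => ∑ i ∈ Finset.range M, F i s :=
  ⟨continuous_finsetSum _ fun i _ => (hF i).continuous,
    fun _ _ hab => Finset.sum_lt_sum_of_nonempty (Finset.nonempty_range_iff.mpr hM.ne')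
      fun i _ => (hF i).strictMono hab,
    Finset.sum_eq_zero fun i _ => (hF i).map_zero⟩

end ClassKGlobal

noncomputable def extendK (f : ℝ → ℝ) (s : ℝ) : ℝ := f (max s 0) + min s 0

theorem extendK_of_nonneg {f : ℝ → ℝ} {s : ℝ} (hs : 0 ≤ s) : extendK f s = f s := by
  simp [extendK, hs]

theorem ClassK.classKGlobal_extendK {f : ℝ → ℝ} (hf : ClassK f) : ClassKGlobal (extendK f) := by
  obtain ⟨hcont, hmono, hzero⟩ := hf
  refine ⟨?_, ?_, by simp [extendK, hzero]⟩
  · exact (hcont.comp_continuous (continuous_id.max continuous_const)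
      fun s => le_max_right s 0).add (continuous_id.min continuous_const)
  · refine StrictMonoOn.Iic_union_Ici (a := 0) (fun s hs t ht hst => ?_) fun s hs t ht hst => ?_
    · simpa [extendK, Set.mem_Iic.mp hs, Set.mem_Iic.mp ht] using hst
    · simpa [extendK_of_nonneg (Set.mem_Ici.mp hs), extendK_of_nonneg (Set.mem_Ici.mp ht)]
        using hmono hs ht hst

theorem ClassK.nonneg {f : ℝ → ℝ} (hf : ClassK f) {s : ℝ} (hs : 0 ≤ s) : 0 ≤ f s := by
  simpa only [extendK_of_nonneg hs] using hf.classKGlobal_extendK.nonneg hs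

theorem ClassKInf.exists_inverse {f : ℝ → ℝ} (hf : ClassKInf f) :
    ∃ finv : ℝ → ℝ, ClassKGlobal finv ∧ ∀ x y, 0 ≤ x → f x ≤ y → x ≤ finv y := by
  have hext := hf.1.classKGlobal_extendK
  have hbot : Tendsto (extendK f) atBot atBot := by
    refine tendsto_id.congr' ?_
    filter_upwards [eventually_le_atBot 0] with s hs
    simp [extendK, hs, hf.1.2.2]
  have htop : Tendsto (extendK f) atTop atTop :=
    hf.2.congr' (eventually_ge_atTop 0 |>.mono fun s hs => (extendK_of_nonneg hs).symm)
  let e := hext.strictMono.orderIsoOfSurjective _ (hext.continuous.surjective htop hbot)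
  refine ⟨e.symm, ⟨e.symm.continuous, e.symm.strictMono, ?_⟩, fun x y hx hxy => ?_⟩
  · exact e.symm_apply_eq.mpr hext.map_zero.symm
  · exact e.le_symm_apply.mpr ((extendK_of_nonneg hx).trans_le hxy)

noncomputable def iterInterp (h : ℝ → ℝ) (ρ t : ℝ) : ℝ :=
  (1 - (t - ⌊t⌋₊)) * h^[⌊t⌋₊] ρ + (t - ⌊t⌋₊) * h^[⌊t⌋₊ + 1] ρ

section IterInterp

variable {h : ℝ → ℝ}

theorem ClassKGlobal.iterate_nonneg (hh : ClassKGlobal h) {ρ : ℝ} (hρ : 0 ≤ ρ) (n : ℕ) :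
    0 ≤ h^[n] ρ := by
  simpa [Function.iterate_fixed hh.map_zero] using (hh.monotone.iterate n) hρ

theorem iterInterp_eq_of_mem_Icc (n : ℕ) {ρ t : ℝ} (ht : t ∈ Set.Icc (n : ℝ) (n + 1)) :
    iterInterp h ρ t = (1 - (t - n)) * h^[n] ρ + (t - n) * h^[n + 1] ρ := by
  obtain ⟨hnt, htn⟩ := ht
  rcases htn.lt_or_eq with htn | rfl
  · rw [iterInterp, (Nat.floor_eq_iff (n.cast_nonneg.trans hnt)).mpr ⟨hnt, htn⟩]
  · have : ⌊(n : ℝ) + 1⌋₊ = n + 1 := by exact_mod_cast Nat.floor_natCast (n + 1)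
    simp only [iterInterp, this, Function.iterate_succ_apply']
    push_cast
    ring

theorem continuousOn_iterInterp (hh : Continuous h) :
    ContinuousOn (fun p : ℝ × ℝ => iterInterp h p.1 p.2) (Set.univ ×ˢ Set.Ici 0) := by
  let S : ℕ → Set (ℝ × ℝ) := fun n => Set.univ ×ˢ Set.Icc (n : ℝ) (n + 1)
  have hS : LocallyFinite S := by
    have := locallyFinite_Icc_of_tendsto (f := fun n : ℤ => (n : ℝ)) (g := fun n => (n : ℝ) + 1)
      tendsto_intCast_atTop_atTop
      (tendsto_atBot_add_const_right _ 1 (tendsto_intCast_atBot_iff.2 tendsto_id))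
    exact (this.comp_injective Nat.cast_injective).prod_left _
  have hcover : Set.univ ×ˢ Set.Ici 0 ⊆ ⋃ n, S n := by
    rintro ⟨ρ, t⟩ ⟨-, ht⟩
    exact Set.mem_iUnion.mpr ⟨⌊t⌋₊, trivial, Nat.floor_le ht, (Nat.lt_floor_add_one t).le⟩
  refine (hS.continuousOn_iUnion (fun n => isClosed_univ.prod isClosed_Icc) fun n => ?_).mono
    hcover
  refine ContinuousOn.congr ?_ fun p hp => iterInterp_eq_of_mem_Icc n hp.2
  exact (Continuous.add (by fun_prop) (by fun_prop)).continuousOn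

theorem ClassKGlobal.iterate_antitone (hh : ClassKGlobal h) (hlt : ∀ s, 0 < s → h s < s) {ρ : ℝ}
    (hρ : 0 ≤ ρ) : Antitone fun n => h^[n] ρ := by
  refine antitone_nat_of_succ_le fun n => ?_
  rw [Function.iterate_succ_apply']
  exact hh.le_self_of_lt hlt (hh.iterate_nonneg hρ n)

theorem ClassKGlobal.tendsto_iterate_zero (hh : ClassKGlobal h) (hlt : ∀ s, 0 < s → h s < s) {ρ : ℝ}
    (hρ : 0 ≤ ρ) : Tendsto (fun n => h^[n] ρ) atTop (𝓝 0) := by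
  have hbdd : BddBelow (Set.range fun n => h^[n] ρ) :=
    ⟨0, Set.forall_mem_range.mpr (hh.iterate_nonneg hρ)⟩
  have hlim := tendsto_atTop_ciInf (hh.iterate_antitone hlt hρ) hbdd
  set L := ⨅ n, h^[n] ρ
  -- the limit of the iterates of a continuous map is a fixed point, and `0` is the only one
  have hfix : h L = L := by
    refine tendsto_nhds_unique ((hh.continuous.tendsto L).comp hlim) ?_
    simpa only [Function.comp_def, ← Function.iterate_succ_apply' h] using
      hlim.comp (tendsto_add_atTop_nat 1)
  rcases (le_ciInf (hh.iterate_nonneg hρ) : 0 ≤ L).eq_or_lt with hL | hL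
  · exact hL ▸ hlim
  · exact absurd hfix (hlt L hL).ne

theorem iterInterp_le_iterate_floor (hh : ClassKGlobal h) (hlt : ∀ s, 0 < s → h s < s) {ρ t : ℝ}
    (hρ : 0 ≤ ρ) (ht : 0 ≤ t) : iterInterp h ρ t ≤ h^[⌊t⌋₊] ρ := by
  have hmono := hh.iterate_antitone hlt hρ (Nat.le_succ ⌊t⌋₊)
  have := Nat.floor_le ht
  have := Nat.lt_floor_add_one t
  unfold iterInterp
  nlinarith

theorem iterate_floor_succ_le_iterInterp (hh : ClassKGlobal h) (hlt : ∀ s, 0 < s → h s < s)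
    {ρ t : ℝ} (hρ : 0 ≤ ρ) (ht : 0 ≤ t) : h^[⌊t⌋₊ + 1] ρ ≤ iterInterp h ρ t := by
  have hmono := hh.iterate_antitone hlt hρ (Nat.le_succ ⌊t⌋₊)
  have := Nat.floor_le ht
  have := Nat.lt_floor_add_one t
  unfold iterInterp
  nlinarith

theorem iterate_le_iterInterp (hh : ClassKGlobal h) (hlt : ∀ s, 0 < s → h s < s) {ρ t : ℝ}
    (hρ : 0 ≤ ρ) (ht : 0 ≤ t) {j : ℕ} (hj : t ≤ j) : h^[j] ρ ≤ iterInterp h ρ t := by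
  rcases (Nat.floor_le_of_le hj).lt_or_eq with hlt' | heq
  · exact (hh.iterate_antitone hlt hρ hlt').trans (iterate_floor_succ_le_iterInterp hh hlt hρ ht)
  · have htj : t = j := hj.antisymm (heq ▸ Nat.floor_le ht)
    simp [iterInterp, htj]

theorem classKGlobal_iterInterp (hh : ClassKGlobal h) {t : ℝ} (ht : 0 ≤ t) :
    ClassKGlobal fun ρ => iterInterp h ρ t := by
  have hθ := Nat.floor_le ht
  have hθ' := Nat.lt_floor_add_one t
  refine ⟨?_, fun a b hab => ?_, by simp [iterInterp, Function.iterate_fixed hh.map_zero]⟩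
  · unfold iterInterp
    exact .add (.mul continuous_const (hh.continuous.iterate _))
      (.mul continuous_const (hh.continuous.iterate _))
  · have h₁ := hh.strictMono.iterate ⌊t⌋₊ hab
    have h₂ := (hh.strictMono.iterate (⌊t⌋₊ + 1)).monotone hab.le
    simp only [iterInterp]
    nlinarith

theorem iterInterp_antitoneOn (hh : ClassKGlobal h) (hlt : ∀ s, 0 < s → h s < s) {ρ : ℝ}
    (hρ : 0 ≤ ρ) : AntitoneOn (iterInterp h ρ) (Set.Ici 0) := by
  intro t₁ ht₁ t₂ ht₂ h12
  rcases (Nat.floor_mono h12).lt_or_eq with hlt' | heq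
  · calc iterInterp h ρ t₂ ≤ h^[⌊t₂⌋₊] ρ := iterInterp_le_iterate_floor hh hlt hρ ht₂
      _ ≤ h^[⌊t₁⌋₊ + 1] ρ := hh.iterate_antitone hlt hρ hlt'
      _ ≤ iterInterp h ρ t₁ := iterate_floor_succ_le_iterInterp hh hlt hρ ht₁
  · have hmono := hh.iterate_antitone hlt hρ (Nat.le_succ ⌊t₁⌋₊)
    simp only [iterInterp, ← heq]
    nlinarith

theorem tendsto_iterInterp_zero (hh : ClassKGlobal h) (hlt : ∀ s, 0 < s → h s < s) {ρ : ℝ}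
    (hρ : 0 ≤ ρ) : Tendsto (iterInterp h ρ) atTop (𝓝 0) := by
  refine tendsto_of_tendsto_of_tendsto_of_le_of_le' tendsto_const_nhds
    ((hh.tendsto_iterate_zero hlt hρ).comp tendsto_nat_floor_atTop) ?_ ?_
  · filter_upwards [eventually_ge_atTop 0] with t ht
    exact (classKGlobal_iterInterp hh ht).nonneg hρ
  · filter_upwards [eventually_ge_atTop 0] with t ht
    exact iterInterp_le_iterate_floor hh hlt hρ ht

end IterInterp

theorem classKL_iterInterp {F a h τ : ℝ → ℝ} (hF : ClassKGlobal F) (ha : ClassKGlobal a)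
    (hh : ClassKGlobal h) (hlt : ∀ s, 0 < s → h s < s) (hτ : Continuous τ)
    (hτ_nonneg : ∀ s, 0 ≤ τ s) (hτ_mono : Monotone τ) (hτ_top : Tendsto τ atTop atTop) :
    ClassKL fun r s => F (iterInterp h (a r) (τ s)) := by
  refine ⟨?_, fun s _ => (hF.comp ((classKGlobal_iterInterp hh (hτ_nonneg s)).comp ha)).classK,
    fun r hr => ⟨fun s₁ _ s₂ _ hs => ?_, ?_⟩⟩
  · have hin : Continuous fun p : ℝ × ℝ => (a p.1, τ p.2) :=
      (ha.continuous.comp continuous_fst).prodMk (hτ.comp continuous_snd)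
    exact hF.continuous.comp_continuousOn ((continuousOn_iterInterp hh.continuous).comp
      hin.continuousOn fun p _ => ⟨trivial, hτ_nonneg p.2⟩)
  · exact hF.monotone (iterInterp_antitoneOn hh hlt (ha.nonneg hr) (hτ_nonneg s₁) (hτ_nonneg s₂)
      (hτ_mono hs))
  · have := (hF.continuous.tendsto 0).comp
      ((tendsto_iterInterp_zero hh hlt (ha.nonneg hr)).comp hτ_top)
    rwa [hF.map_zero] at this

def growthBound (κ₁ κ₂ : ℝ → ℝ) : ℕ → ℝ → ℝ
  | 0 => fun s => s
  | i + 1 => fun s => κ₁ (growthBound κ₁ κ₂ i s) + κ₂ s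

theorem ClassKGlobal.growthBound {κ₁ κ₂ : ℝ → ℝ} (h₁ : ClassKGlobal κ₁) (h₂ : ClassKGlobal κ₂)
    (i : ℕ) : ClassKGlobal (growthBound κ₁ κ₂ i) := by
  induction i with
  | zero => exact ClassKGlobal.id
  | succ i ih => exact (h₁.comp ih).add h₂

def growthBoundSum (κ₁ κ₂ : ℝ → ℝ) (M : ℕ) (s : ℝ) : ℝ :=
  ∑ i ∈ Finset.range M, growthBound κ₁ κ₂ i s

theorem ClassKGlobal.growthBoundSum {κ₁ κ₂ : ℝ → ℝ} (h₁ : ClassKGlobal κ₁)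
    (h₂ : ClassKGlobal κ₂) {M : ℕ} (hM : 0 < M) : ClassKGlobal (growthBoundSum κ₁ κ₂ M) :=
  ClassKGlobal.sum (h₁.growthBound h₂) hM

theorem growthBound_le_growthBoundSum {κ₁ κ₂ : ℝ → ℝ} (h₁ : ClassKGlobal κ₁)
    (h₂ : ClassKGlobal κ₂) {M i : ℕ} (hi : i < M) {s : ℝ} (hs : 0 ≤ s) :
    growthBound κ₁ κ₂ i s ≤ growthBoundSum κ₁ κ₂ M s :=
  Finset.single_le_sum (fun l _ => (h₁.growthBound h₂ l).nonneg hs)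
    (Finset.mem_range.mpr hi)

section Trajectories

variable {X U : Type*}

theorem sol_add (g : X → U → X) (ξ : X) (u : ℕ → U) (n j : ℕ) :
    sol g ξ u (n + j) = sol g (sol g ξ u n) (fun i => u (n + i)) j := by
  induction j with
  | zero => rfl
  | succ j ih => exact congrArg₂ g ih rfl

variable [SeminormedAddGroup U]

theorem supNorm_nonneg (u : ℕ → U) : 0 ≤ supNorm u :=
  Real.iSup_nonneg fun _ => norm_nonneg _

theorem BddInput.norm_le_supNorm {u : ℕ → U} (hu : BddInput u) (k : ℕ) : ‖u k‖ ≤ supNorm u :=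
  le_ciSup (hu.imp fun _ hC => Set.forall_mem_range.mpr hC) k

theorem BddInput.shift {u : ℕ → U} (hu : BddInput u) (n : ℕ) : BddInput fun i => u (n + i) :=
  hu.imp fun _ hC i => hC (n + i)

theorem BddInput.supNorm_shift_le {u : ℕ → U} (hu : BddInput u) (n : ℕ) :
    supNorm (fun i => u (n + i)) ≤ supNorm u :=
  ciSup_le fun i => hu.norm_le_supNorm (n + i)

theorem le_growthBound {g : X → U → X} {ω : X → ℝ} {κ₁ κ₂ : ℝ → ℝ} (h₁ : ClassKGlobal κ₁)
    (h₂ : ClassKGlobal κ₂) (hkb : ∀ ξ μ, ω (g ξ μ) ≤ κ₁ (ω ξ) + κ₂ ‖μ‖) (ξ : X) {u : ℕ → U}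
    (hu : BddInput u) (i : ℕ) : ω (sol g ξ u i) ≤ growthBound κ₁ κ₂ i (max (ω ξ) (supNorm u)) := by
  induction i with
  | zero => exact le_max_left _ _
  | succ i ih =>
    exact (hkb _ _).trans (add_le_add (h₁.monotone ih)
      (h₂.monotone ((hu.norm_le_supNorm i).trans (le_max_right _ _))))

theorem lyapunov_sol_mul_le {g : X → U → X} {V : X → ℝ} {α γ : ℝ → ℝ} {M : ℕ}
    (hα : ClassKGlobal α) (hlt : ∀ s, 0 < s → α s < s) (hγ : ClassKGlobal γ)
    (hdecay : ∀ ξ u, BddInput u → V (sol g ξ u M) ≤ max (α (V ξ)) (γ (supNorm u))) (ξ : X)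
    {u : ℕ → U} (hu : BddInput u) (j : ℕ) :
    V (sol g ξ u (M * j)) ≤ max (α^[j] (V ξ)) (γ (supNorm u)) := by
  induction j with
  | zero => simp [sol]
  | succ j ih =>
    have hγc := hγ.nonneg (supNorm_nonneg u)
    calc V (sol g ξ u (M * (j + 1)))
        = V (sol g (sol g ξ u (M * j)) (fun i => u (M * j + i)) M) := by
          rw [Nat.mul_succ, sol_add]
      _ ≤ max (α (V (sol g ξ u (M * j)))) (γ (supNorm u)) :=
        (hdecay _ _ (hu.shift _)).trans (max_le_max_left _ (hγ.monotone (hu.supNorm_shift_le _)))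
      _ ≤ max (α (max (α^[j] (V ξ)) (γ (supNorm u)))) (γ (supNorm u)) :=
        max_le_max_right _ (hα.monotone ih)
      _ ≤ max (α^[j + 1] (V ξ)) (γ (supNorm u)) := by
        rw [hα.monotone.map_max, Function.iterate_succ_apply']
        exact max_le (max_le_max_left _ (hα.le_self_of_lt hlt hγc)) le_sup_right

theorem measurement_sol_le_of_lyapunov {g : X → U → X} {ω V : X → ℝ}
    {κ₁ κ₂ αlinv αu α γ : ℝ → ℝ} {M : ℕ} (hM : 0 < M) (hω : ∀ x, 0 ≤ ω x)
    (hκ₁ : ClassKGlobal κ₁) (hκ₂ : ClassKGlobal κ₂)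
    (hkb : ∀ ξ μ, ω (g ξ μ) ≤ κ₁ (ω ξ) + κ₂ ‖μ‖)
    (hαlinv : ClassKGlobal αlinv) (hαu : ClassKGlobal αu) (hα : ClassKGlobal α)
    (hlt : ∀ s, 0 < s → α s < s) (hγ : ClassKGlobal γ)
    (hVl : ∀ x, ω x ≤ αlinv (V x)) (hVu : ∀ x, V x ≤ αu (ω x))
    (hdecay : ∀ ξ u, BddInput u → V (sol g ξ u M) ≤ max (α (V ξ)) (γ (supNorm u)))
    (ξ : X) {u : ℕ → U} (hu : BddInput u) (k : ℕ) :
    ω (sol g ξ u k) ≤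
      max (growthBoundSum κ₁ κ₂ M (αlinv (iterInterp α (αu (ω ξ)) (max ((k : ℝ) / M - 1) 0))))
        (growthBoundSum κ₁ κ₂ M (αlinv (γ (supNorm u)) + supNorm u)) := by
  set c := supNorm u
  set A := iterInterp α (αu (ω ξ)) (max ((k : ℝ) / M - 1) 0)
  set j := k / M
  set i := k % M
  have hsol : sol g ξ u k = sol g (sol g ξ u (M * j)) (fun l => u (M * j + l)) i := by
    rw [← sol_add, Nat.div_add_mod]
  -- the KL bound runs one sampling period behind, so it dominates the decay at time `M * j ≤ k`
  have htime : max ((k : ℝ) / M - 1) 0 ≤ j := by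
    refine max_le ?_ (Nat.cast_nonneg _)
    have := Nat.lt_floor_add_one ((k : ℝ) / M)
    rw [Nat.floor_div_eq_div] at this
    linarith
  have hsample : V (sol g ξ u (M * j)) ≤ max A (γ c) :=
    (lyapunov_sol_mul_le hα hlt hγ hdecay ξ hu j).trans <| max_le_max_right _ <|
      (hα.monotone.iterate j (hVu ξ)).trans
        (iterate_le_iterInterp hα hlt (hαu.nonneg (hω ξ)) (le_max_right _ _) htime)
  have hstart : max (ω (sol g ξ u (M * j))) (supNorm fun l => u (M * j + l)) ≤
      max (αlinv A) (αlinv (γ c) + c) := by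
    refine max_le ?_ ((hu.supNorm_shift_le _).trans ?_)
    · calc ω (sol g ξ u (M * j)) ≤ αlinv (max A (γ c)) := (hVl _).trans (hαlinv.monotone hsample)
        _ = max (αlinv A) (αlinv (γ c)) := hαlinv.monotone.map_max
        _ ≤ _ := max_le_max_left _ (le_add_of_nonneg_right (supNorm_nonneg u))
    · exact (le_add_of_nonneg_left (hαlinv.nonneg (hγ.nonneg (supNorm_nonneg u)))).trans
        (le_max_right _ _)
  calc ω (sol g ξ u k)
      ≤ growthBound κ₁ κ₂ i (max (αlinv A) (αlinv (γ c) + c)) :=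
        hsol ▸ (le_growthBound hκ₁ hκ₂ hkb _ (hu.shift _) i).trans
          ((hκ₁.growthBound hκ₂ i).monotone hstart)
    _ ≤ growthBoundSum κ₁ κ₂ M (max (αlinv A) (αlinv (γ c) + c)) :=
        growthBound_le_growthBoundSum hκ₁ hκ₂ (Nat.mod_lt k hM)
          (((hω _).trans (le_max_left _ _)).trans hstart)
    _ = _ := (hκ₁.growthBoundSum hκ₂ hM).monotone.map_max

end Trajectories

theorem partial_ISS_sufficiency_general (n₁ n₂ m : ℕ)
    (g : EuclideanSpace ℝ (Fin n₁) × EuclideanSpace ℝ (Fin n₂) →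
         EuclideanSpace ℝ (Fin m) →
         EuclideanSpace ℝ (Fin n₁) × EuclideanSpace ℝ (Fin n₂))
    -- global K-boundedness with respect to ω(x₁,x₂) = |x₁|
    (κ₁ κ₂ : ℝ → ℝ) (hκ₁ : ClassKInf κ₁) (hκ₂ : ClassKInf κ₂)
    (hkb : ∀ ξ μ, ‖(g ξ μ).1‖ ≤ κ₁ ‖ξ.1‖ + κ₂ ‖μ‖)
    (V : EuclideanSpace ℝ (Fin n₁) × EuclideanSpace ℝ (Fin n₂) → ℝ)
    (M : ℕ) (hM : 0 < M)
    (αl αu α γ : ℝ → ℝ) (hαl : ClassKInf αl) (hαu : ClassKInf αu)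
    (hγ : ClassK γ) (hα : ClassKInf α) (hαlt : ∀ s > (0:ℝ), α s < s)
    (hsand : ∀ ξ : EuclideanSpace ℝ (Fin n₁) × EuclideanSpace ℝ (Fin n₂),
      αl ‖ξ.1‖ ≤ V ξ ∧ V ξ ≤ αu ‖ξ.1‖)
    (hdecay : ∀ ξ u, BddInput u →
      V (sol g ξ u M) ≤ max (α (V ξ)) (γ (supNorm u))) :
    ∃ β γ', ClassKL β ∧ ClassK γ' ∧
      ∀ ξ u, BddInput u → ∀ k : ℕ,
        ‖(sol g ξ u k).1‖ ≤ max (β ‖ξ.1‖ (k : ℝ)) (γ' (supNorm u)) := by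
  obtain ⟨αlinv, hαlinv, hαl_le⟩ := hαl.exists_inverse
  have hV_nonneg ξ : 0 ≤ V ξ := (hαl.1.nonneg (norm_nonneg _)).trans (hsand ξ).1
  have hαlt' s (hs : 0 < s) : extendK α s < s := (extendK_of_nonneg hs.le).trans_lt (hαlt s hs)
  have hΨ := hκ₁.1.classKGlobal_extendK.growthBoundSum hκ₂.1.classKGlobal_extendK hM
  have hτ : Tendsto (fun s : ℝ => max (s / M - 1) 0) atTop atTop :=
    tendsto_atTop_mono (fun _ => le_max_left _ _)
      (tendsto_atTop_add_const_right _ _ (tendsto_id.atTop_div_const (by positivity)))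
  refine ⟨fun r s => growthBoundSum (extendK κ₁) (extendK κ₂) M
      (αlinv (iterInterp (extendK α) (extendK αu r) (max (s / M - 1) 0))),
    fun c => growthBoundSum (extendK κ₁) (extendK κ₂) M (αlinv (extendK γ c) + c),
    classKL_iterInterp (hΨ.comp hαlinv) hαu.1.classKGlobal_extendK hα.1.classKGlobal_extendK
      hαlt' (by fun_prop) (fun _ => le_max_right _ _) (fun _ _ hst => by gcongr) hτ,
    (hΨ.comp ((hαlinv.comp hγ.classKGlobal_extendK).add .id)).classK,
    fun ξ u hu k => ?_⟩
  exact measurement_sol_le_of_lyapunov hM (fun _ => norm_nonneg _) hκ₁.1.classKGlobal_extendK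
    hκ₂.1.classKGlobal_extendK (by simpa only [extendK_of_nonneg, norm_nonneg] using hkb) hαlinv
    hαu.1.classKGlobal_extendK hα.1.classKGlobal_extendK hαlt' hγ.classKGlobal_extendK
    (fun ξ => hαl_le _ _ (norm_nonneg _) (hsand ξ).1)
    (fun ξ => by simpa only [extendK_of_nonneg (norm_nonneg ξ.1)] using (hsand ξ).2)
    (fun ξ (u : ℕ → EuclideanSpace ℝ (Fin m)) hu => by
      simpa only [extendK_of_nonneg (hV_nonneg ξ), extendK_of_nonneg (supNorm_nonneg u)] using
        hdecay ξ u hu)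
    ξ hu k

/-- partial-ISS Lyapunov sufficiency: a finite-step Lyapunov
function for the x₁-part yields uniform input-to-x₁-state stability. -/
theorem partial_ISS_sufficiency (n₁ n₂ m : ℕ)
    (g : EuclideanSpace ℝ (Fin n₁) × EuclideanSpace ℝ (Fin n₂) →
         EuclideanSpace ℝ (Fin m) →
         EuclideanSpace ℝ (Fin n₁) × EuclideanSpace ℝ (Fin n₂))
    (hg : Continuous fun p : (EuclideanSpace ℝ (Fin n₁) × EuclideanSpace ℝ (Fin n₂)) ×
      EuclideanSpace ℝ (Fin m) => g p.1 p.2)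
    (hg0 : ∀ ξ₂, (g (0, ξ₂) 0).1 = 0)
    -- global K-boundedness with respect to ω(x₁,x₂) = |x₁|
    (κ₁ κ₂ : ℝ → ℝ) (hκ₁ : ClassKInf κ₁) (hκ₂ : ClassKInf κ₂)
    (hkb : ∀ ξ μ, ‖(g ξ μ).1‖ ≤ κ₁ ‖ξ.1‖ + κ₂ ‖μ‖)
    (V : EuclideanSpace ℝ (Fin n₁) × EuclideanSpace ℝ (Fin n₂) → ℝ)
    (hVcont : Continuous V)
    (M : ℕ) (hM : 0 < M)
    (αl αu α γ : ℝ → ℝ) (hαl : ClassKInf αl) (hαu : ClassKInf αu)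
    (hγ : ClassK γ) (hα : ClassKInf α) (hαlt : ∀ s > (0:ℝ), α s < s)
    (hsand : ∀ ξ : EuclideanSpace ℝ (Fin n₁) × EuclideanSpace ℝ (Fin n₂),
      αl ‖ξ.1‖ ≤ V ξ ∧ V ξ ≤ αu ‖ξ.1‖)
    (hdecay : ∀ ξ u, BddInput u →
      V (sol g ξ u M) ≤ max (α (V ξ)) (γ (supNorm u))) :
    ∃ β γ', ClassKL β ∧ ClassK γ' ∧
      ∀ ξ u, BddInput u → ∀ k : ℕ,
        ‖(sol g ξ u k).1‖ ≤ max (β ‖ξ.1‖ (k : ℝ)) (γ' (supNorm u)) :=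
  partial_ISS_sufficiency_general n₁ n₂ m g κ₁ κ₂ hκ₁ hκ₂ hkb V M hM αl αu α γ hαl hαu hγ hα hαlt
    hsand hdecay
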